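/- Let δ > 0, β₀ > 0, β₁ < 0, and let ω > 0, τ > 0. Then Δ(iω, τ) = 0 if and only if sin(ωτ)/(ωτ) = (δ + β₀β₁)/(2β₀β₁) and (cos(ωτ) − 1)/(ωτ)² = 1/(2β₀β₁τ). -/

import Mathlib

/-- The characteristic function
`Δ(λ,τ) = λ + δ + β₀β₁ − (2β₀β₁/τ)∫_{−τ}^{0} e^{λ s} ds`, for `λ ∈ ℂ`. -/
noncomputable def charFn (δ β₀ β₁ τ : ℝ) (lam : ℂ) : ℂ :=
  lam + (δ : ℂ) + (β₀ : ℂ) * (β₁ : ℂ) -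
    ((2 * β₀ * β₁ / τ : ℝ) : ℂ) * ∫ s in (-τ)..(0 : ℝ), Complex.exp (lam * (s : ℂ))

/-! With `θ = ωτ`, the delay integral evaluates to `∫_{-τ}^0 e^{iωs} ds = (sin θ + i (cos θ - 1)) / ω`,
so `Δ(iω, τ)` has real part `δ + β₀β₁ - 2β₀β₁ sin θ / θ` and imaginary part
`ω - 2β₀β₁ (cos θ - 1) / θ`; the two conditions are the vanishing of these parts, solved for
`sin θ / θ` and `(cos θ - 1) / θ²`. -/

open Complex

theorem integral_neg_zero_exp_I_mul {ω : ℝ} (hω : ω ≠ 0) (τ : ℝ) :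
    ∫ s in (-τ)..(0:ℝ), exp (I * ω * s) = (Real.sin (ω * τ) + (Real.cos (ω * τ) - 1) * I) / ω := by
  have hc : I * (ω : ℂ) ≠ 0 := mul_ne_zero I_ne_zero (ofReal_ne_zero.2 hω)
  have hexp : exp (I * ω * ((-τ : ℝ) : ℂ)) = Real.cos (ω * τ) - Real.sin (ω * τ) * I := by
    rw [show I * ω * ((-τ : ℝ) : ℂ) = (-(ω * τ) : ℝ) * I by push_cast; ring, exp_mul_I]
    push_cast
    rw [Complex.cos_neg, Complex.sin_neg]
    ring
  rw [integral_exp_mul_complex hc, hexp, ofReal_zero, mul_zero, exp_zero,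
    div_eq_div_iff hc (ofReal_ne_zero.2 hω)]
  ring_nf
  rw [I_sq]
  ring

theorem charFn_I_mul {ω τ : ℝ} (hω : ω ≠ 0) (hτ : τ ≠ 0) (δ β₀ β₁ : ℝ) :
    charFn δ β₀ β₁ τ (I * ω) =
      ⟨δ + β₀ * β₁ - 2 * β₀ * β₁ * Real.sin (ω * τ) / (ω * τ),
        ω - 2 * β₀ * β₁ * (Real.cos (ω * τ) - 1) / (ω * τ)⟩ := by
  have hω' : (ω : ℂ) ≠ 0 := ofReal_ne_zero.2 hω
  have hτ' : (τ : ℂ) ≠ 0 := ofReal_ne_zero.2 hτ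
  rw [charFn, integral_neg_zero_exp_I_mul hω, mk_eq_add_mul_I]
  push_cast
  field_simp
  ring

theorem charFn_imaginary_zero_iff_general
    (δ β₀ β₁ ω τ : ℝ) (hβ₀ : 0 < β₀) (hβ₁ : β₁ < 0)
    (hω : 0 < ω) (hτ : 0 < τ) :
    charFn δ β₀ β₁ τ (Complex.I * (ω : ℂ)) = 0 ↔
      (Real.sin (ω * τ) / (ω * τ) = (δ + β₀ * β₁) / (2 * β₀ * β₁) ∧
        (Real.cos (ω * τ) - 1) / (ω * τ) ^ 2 = 1 / (2 * β₀ * β₁ * τ)) := by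
  have hb : 2 * β₀ * β₁ ≠ 0 := mul_ne_zero (mul_ne_zero two_ne_zero hβ₀.ne') hβ₁.ne
  have hθ : ω * τ ≠ 0 := mul_ne_zero hω.ne' hτ.ne'
  rw [charFn_I_mul hω.ne' hτ.ne', Complex.ext_iff]
  refine and_congr ?_ ?_
  · rw [zero_re, sub_eq_zero, eq_div_iff hb, mul_div_right_comm, eq_comm, div_mul_comm]
  · rw [zero_im, sub_eq_zero, eq_div_iff hθ,
      div_eq_div_iff (pow_ne_zero 2 hθ) (mul_ne_zero hb hτ.ne')]
    constructor
    · intro h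
      linear_combination -τ * h
    · intro h
      apply mul_right_cancel₀ hτ.ne'
      linear_combination -h

/-- for `β₁ < 0`, `ω, τ > 0`, `Δ(iω, τ) = 0` iff
`sin(ωτ)/(ωτ) = (δ + β₀β₁)/(2β₀β₁)` and `(cos(ωτ) − 1)/(ωτ)² = 1/(2β₀β₁τ)`. -/
theorem charFn_imaginary_zero_iff
    (δ β₀ β₁ ω τ : ℝ) (hδ : 0 < δ) (hβ₀ : 0 < β₀) (hβ₁ : β₁ < 0)
    (hω : 0 < ω) (hτ : 0 < τ) :
    charFn δ β₀ β₁ τ (Complex.I * (ω : ℂ)) = 0 ↔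
      (Real.sin (ω * τ) / (ω * τ) = (δ + β₀ * β₁) / (2 * β₀ * β₁) ∧
        (Real.cos (ω * τ) - 1) / (ω * τ) ^ 2 = 1 / (2 * β₀ * β₁ * τ)) :=
  charFn_imaginary_zero_iff_general δ β₀ β₁ ω τ hβ₀ hβ₁ hω hτ
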